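/- For every λ > 0, the function Φ^{2,λ}(t,y) := ((y−λ)/(√((1−t)³)·y)) · exp(λ²/2) · exp(−(y−λ)²/(2(1−t))), defined for t ∈ (0,1) and y > 0, satisfies the partial differential equation (1/2)·∂²_{yy}Φ^{2,λ}(t,y) + (1/y)·∂_y Φ^{2,λ}(t,y) + ∂_t Φ^{2,λ}(t,y) = 0 for all t ∈ (0,1) and y > 0. -/

import Mathlib

/-!
With `s = 1 - t` and `x = y - λ` one has `Φ^{2,λ}(t, y) = e^{λ²/2} w(s, x) / y`, where
`w(s, x) = x s^{-3/2} e^{-x²/2s}` solves the heat equation `∂ₛ w = ½ ∂ₓ² w`. As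
`(½∂²_{yy} + (1/y)∂_y)(u / y) = (½ u'') / y`, the equation for `Φ^{2,λ}` reduces to the
backward heat equation for `u(t, y) = w(1 - t, y - λ)`.
-/

open Real

/-- `Φ^{2,λ}(t,y)`. -/
noncomputable def Phi2 (lam t y : ℝ) : ℝ :=
  (y - lam) / (Real.sqrt ((1 - t) ^ 3) * y) * Real.exp (lam ^ 2 / 2) *
    Real.exp (-(y - lam) ^ 2 / (2 * (1 - t)))

/-- `-√(2π) ∂ₓ` of the Gaussian heat kernel `exp (-x² / 2s) / √(2πs)`. -/
noncomputable def heatKernelDeriv (s x : ℝ) : ℝ :=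
  x / √(s ^ 3) * exp (-x ^ 2 / (2 * s))

lemma hasDerivAt_exp_neg_sq_div (s x : ℝ) :
    HasDerivAt (fun x => exp (-x ^ 2 / (2 * s))) (-x / s * exp (-x ^ 2 / (2 * s))) x :=
  ((hasDerivAt_pow 2 x).fun_neg.div_const (2 * s)).exp.congr_deriv (by push_cast; ring)

lemma hasDerivAt_heatKernelDeriv (s x : ℝ) :
    HasDerivAt (heatKernelDeriv s) ((1 - x ^ 2 / s) / √(s ^ 3) * exp (-x ^ 2 / (2 * s))) x :=
  (((hasDerivAt_id' x).div_const √(s ^ 3)).mul (hasDerivAt_exp_neg_sq_div s x)).congr_deriv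
    (by ring)

lemma hasDerivAt_deriv_heatKernelDeriv (s x : ℝ) :
    HasDerivAt (fun x => (1 - x ^ 2 / s) / √(s ^ 3) * exp (-x ^ 2 / (2 * s)))
      ((x ^ 2 / s ^ 2 - 3 / s) * heatKernelDeriv s x) x :=
  ((((hasDerivAt_pow 2 x).div_const s).const_sub 1 |>.div_const √(s ^ 3)).mul
    (hasDerivAt_exp_neg_sq_div s x)).congr_deriv (by unfold heatKernelDeriv; ring)

lemma hasDerivAt_heatKernelDeriv_time {s : ℝ} (x : ℝ) (hs : 0 < s) :
    HasDerivAt (fun r => heatKernelDeriv r x)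
      ((x ^ 2 / s ^ 2 - 3 / s) / 2 * heatKernelDeriv s x) s := by
  have hsqrt : HasDerivAt (fun r => √(r ^ 3)) (3 * s ^ 2 / (2 * √(s ^ 3))) s := by
    simpa using (hasDerivAt_pow 3 s).sqrt (by positivity)
  have hexp : HasDerivAt (fun r => exp (-x ^ 2 / (2 * r)))
      (x ^ 2 / (2 * s ^ 2) * exp (-x ^ 2 / (2 * s))) s :=
    ((hasDerivAt_const s (-x ^ 2)).fun_div ((hasDerivAt_id' s).const_mul 2)
      (by positivity)).exp.congr_deriv (by field_simp; ring)
  refine (((hasDerivAt_const s x).fun_div hsqrt (by positivity)).mul hexp).congr_deriv ?_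
  have hroot : √(s ^ 3) ^ 2 = s ^ 3 := sq_sqrt (by positivity)
  unfold heatKernelDeriv
  field_simp
  rw [hroot]
  ring

lemma deriv_heatKernelDeriv (s : ℝ) :
    deriv (heatKernelDeriv s) = fun x => (1 - x ^ 2 / s) / √(s ^ 3) * exp (-x ^ 2 / (2 * s)) :=
  funext fun x => (hasDerivAt_heatKernelDeriv s x).deriv

lemma differentiable_heatKernelDeriv (s : ℝ) : Differentiable ℝ (heatKernelDeriv s) :=
  fun x => (hasDerivAt_heatKernelDeriv s x).differentiableAt

lemma differentiable_deriv_heatKernelDeriv (s : ℝ) :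
    Differentiable ℝ (deriv (heatKernelDeriv s)) := by
  rw [deriv_heatKernelDeriv]
  exact fun x => (hasDerivAt_deriv_heatKernelDeriv s x).differentiableAt

lemma heatKernelDeriv_heat_equation {s : ℝ} (x : ℝ) (hs : 0 < s) :
    deriv (fun r => heatKernelDeriv r x) s = deriv (deriv (heatKernelDeriv s)) x / 2 := by
  rw [(hasDerivAt_heatKernelDeriv_time x hs).deriv, deriv_heatKernelDeriv,
    (hasDerivAt_deriv_heatKernelDeriv s x).deriv]
  ring

open Filter Topology in
/-- The three dimensional Bessel process is Brownian motion `h`-transformed by `h(y) = y`, so its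
generator `½∂² + (1/y)∂` acts on `u / y` as `½∂²` acts on `u`. -/
lemma bessel3_generator_div_id {u : ℝ → ℝ} {y : ℝ} (hy : y ≠ 0)
    (hu : ∀ᶠ z in 𝓝 y, DifferentiableAt ℝ u z) (hu' : DifferentiableAt ℝ (deriv u) y) :
    (1 / 2) * deriv (deriv fun z => u z / z) y + (1 / y) * deriv (fun z => u z / z) y =
      deriv (deriv u) y / (2 * y) := by
  have hfirst : deriv (fun z => u z / z) =ᶠ[𝓝 y] fun z => (deriv u z * z - u z) / z ^ 2 := by
    filter_upwards [hu, eventually_ne_nhds hy] with z hz hz0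
    exact (hz.hasDerivAt.fun_div (hasDerivAt_id' z) hz0).deriv.trans (by ring)
  have hsecond := ((hu'.hasDerivAt.fun_mul (hasDerivAt_id' y)).fun_sub
    hu.self_of_nhds.hasDerivAt).fun_div (hasDerivAt_pow 2 y) (pow_ne_zero 2 hy)
  rw [hfirst.deriv_eq, hsecond.deriv, hfirst.eq_of_nhds]
  field_simp
  ring

theorem Phi2_pde_general (lam : ℝ) (t : ℝ) (ht : t ∈ Set.Ioo (0 : ℝ) 1)
    (y : ℝ) (hy : 0 < y) :
    (1 / 2) * deriv (fun z => deriv (fun w => Phi2 lam t w) z) y +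
      (1 / y) * deriv (fun w => Phi2 lam t w) y +
      deriv (fun s => Phi2 lam s y) t = 0 := by
  have hs : 0 < 1 - t := by linarith [ht.2]
  set c := exp (lam ^ 2 / 2)
  have hspace : (fun w => Phi2 lam t w) = fun z => c * heatKernelDeriv (1 - t) (z - lam) / z := by
    funext z; unfold Phi2 heatKernelDeriv; ring
  have htime : (fun s => Phi2 lam s y) = fun s => c / y * heatKernelDeriv (1 - s) (y - lam) := by
    funext s; unfold Phi2 heatKernelDeriv; ring
  rw [hspace, htime, bessel3_generator_div_id (u := fun z => c * heatKernelDeriv (1 - t) (z - lam))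
    hy.ne' ?_ ?_]
  · simp only [deriv_const_mul_field', deriv_comp_sub_const,
      deriv_comp_const_sub (f := fun r => heatKernelDeriv r (y - lam)),
      heatKernelDeriv_heat_equation _ hs]
    field_simp
    ring
  · exact .of_forall fun z =>
      ((differentiable_heatKernelDeriv _ _).comp z (differentiableAt_id.sub_const lam)).const_mul c
  · simp only [deriv_const_mul_field', deriv_comp_sub_const]
    exact ((differentiable_deriv_heatKernelDeriv _ _).comp y
      (differentiableAt_id.sub_const lam)).const_mul c

/-- `Φ^{2,λ}` solves the backward equation of the three dimensional
Bessel process: `(1/2)∂²_{yy}Φ² + (1/y)∂_yΦ² + ∂_tΦ² = 0` on `(0,1) × (0,∞)`. -/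
theorem Phi2_pde (lam : ℝ) (hlam : 0 < lam) (t : ℝ) (ht : t ∈ Set.Ioo (0 : ℝ) 1)
    (y : ℝ) (hy : 0 < y) :
    (1 / 2) * deriv (fun z => deriv (fun w => Phi2 lam t w) z) y +
      (1 / y) * deriv (fun w => Phi2 lam t w) y +
      deriv (fun s => Phi2 lam s y) t = 0 :=
  Phi2_pde_general lam t ht y hy
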